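/- Let D ∈ ℝ^{n×n} be skew-symmetric, Φ ∈ ℝ^{n×r}, Q ∈ ℝ^{n×n} symmetric, c ∈ ℝⁿ, u₀ ∈ ℝⁿ, 𝒫 ∈ ℝ^{n×n}, and G : ℝⁿ → ℝⁿ differentiable. Define the shifted reduced Hamiltonian H_r(a) = ½ (Φa + u₀)ᵀ Q (Φa + u₀) + cᵀ [𝒫 G(Φa + u₀) + (I − 𝒫) G(u₀)], and set D_r = Φᵀ D Φ. If a : ℝ → ℝ^r is differentiable, satisfies ȧ(t) = D_r ∇ₐH_r(a(t)), and a(0) = 0, then H_r(a(t)) = H(u₀) for all t, where H(u) = ½ uᵀ Q u + cᵀ G(u) is the full-order discrete Hamiltonian. -/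

import Mathlib

/-!
Along the reduced flow, `d/dt H_r(a(t)) = ⟨∇H_r, D_r ∇H_r⟩ = 0`, because the congruence
`D_r = Φᵀ D Φ` inherits skew-symmetry from `D`. Hence `H_r(a(t)) = H_r(0)`, and at `a = 0` the
shifted DEIM term `𝒫 G(u₀) + (I − 𝒫) G(u₀)` is exactly `G(u₀)`, so `H_r(0) = H(u₀)`.
-/

open Matrix

namespace Matrix

variable {R m n : Type*} [CommRing R]

theorem transpose_transpose_mul_mul_eq_neg [Fintype m] {D : Matrix m m R} (hD : Dᵀ = -D)
    (Φ : Matrix m n R) :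
    (Φᵀ * D * Φ)ᵀ = -(Φᵀ * D * Φ) := by
  simp only [transpose_mul, transpose_transpose, hD, Matrix.mul_neg, Matrix.neg_mul,
    Matrix.mul_assoc]

theorem dotProduct_mulVec_self_eq_zero [Fintype n] [NoZeroDivisors R] [CharZero R]
    {M : Matrix n n R} (hM : Mᵀ = -M) (v : n → R) : v ⬝ᵥ M *ᵥ v = 0 := by
  rw [← CharZero.eq_neg_self_iff]
  calc v ⬝ᵥ M *ᵥ v = Mᵀ *ᵥ v ⬝ᵥ v := by rw [mulVec_transpose, dotProduct_mulVec]
    _ = -(v ⬝ᵥ M *ᵥ v) := by rw [hM, neg_mulVec, neg_dotProduct, dotProduct_comm]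

end Matrix

section Differentiability

variable {𝕜 E ι κ : Type*} [NontriviallyNormedField 𝕜] [NormedAddCommGroup E] [NormedSpace 𝕜 E]
  [Fintype ι] {f g : E → ι → 𝕜}

@[fun_prop]
theorem Differentiable.dotProduct (hf : Differentiable 𝕜 f) (hg : Differentiable 𝕜 g) :
    Differentiable 𝕜 fun x => f x ⬝ᵥ g x := by
  unfold _root_.dotProduct
  fun_prop

@[fun_prop]
theorem Differentiable.matrix_mulVec (M : Matrix κ ι 𝕜) (hf : Differentiable 𝕜 f) :
    Differentiable 𝕜 fun x => M *ᵥ f x := by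
  unfold mulVec
  fun_prop

end Differentiability

section PiLp

variable {𝕜 ι : Type*} [NontriviallyNormedField 𝕜] [Fintype ι] {p : ENNReal} [Fact (1 ≤ p)]
  {β : ι → Type*} [∀ i, NormedAddCommGroup (β i)] [∀ i, NormedSpace 𝕜 (β i)]

@[fun_prop]
theorem PiLp.differentiable_ofLp : Differentiable 𝕜 (@WithLp.ofLp p (Π i, β i)) :=
  (PiLp.continuousLinearEquiv p 𝕜 β).differentiable

@[fun_prop]
theorem PiLp.differentiable_toLp : Differentiable 𝕜 (@WithLp.toLp p (Π i, β i)) :=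
  (PiLp.continuousLinearEquiv p 𝕜 β).symm.differentiable

end PiLp

theorem hamiltonian_comp_eq_of_skew_gradient_flow {ι : Type*} [Fintype ι]
    {H : EuclideanSpace ℝ ι → ℝ} (hH : Differentiable ℝ H) {J : Matrix ι ι ℝ} (hJ : Jᵀ = -J)
    {a : ℝ → EuclideanSpace ℝ ι} (ha : Differentiable ℝ a)
    (hflow : ∀ t, (deriv a t).ofLp = J *ᵥ (gradient H (a t)).ofLp) (s t : ℝ) :
    H (a s) = H (a t) := by
  refine is_const_of_deriv_eq_zero (hH.comp ha) (fun t => ?_) s t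
  calc deriv (H ∘ a) t = inner ℝ (gradient H (a t)) (deriv a t) := by
        rw [fderiv_comp_deriv t (hH _) (ha t), (hH _).hasGradientAt.fderiv_apply]
    _ = (J *ᵥ (gradient H (a t)).ofLp) ⬝ᵥ (gradient H (a t)).ofLp := by
        rw [EuclideanSpace.inner_eq_star_dotProduct, hflow, star_trivial]
    _ = 0 := by rw [dotProduct_comm, dotProduct_mulVec_self_eq_zero hJ]

theorem sp_deim_shifted_hamiltonian_equals_initial_general
    {n r : ℕ} (D : Matrix (Fin n) (Fin n) ℝ) (hD : Dᵀ = -D)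
    (Φ : Matrix (Fin n) (Fin r) ℝ)
    (Q : Matrix (Fin n) (Fin n) ℝ)
    (c : Fin n → ℝ) (u₀ : EuclideanSpace ℝ (Fin n))
    (Pdeim : Matrix (Fin n) (Fin n) ℝ)
    (G : EuclideanSpace ℝ (Fin n) → EuclideanSpace ℝ (Fin n))
    (hG : Differentiable ℝ G)
    (Hr : EuclideanSpace ℝ (Fin r) → ℝ)
    (hHr : Hr = fun b : EuclideanSpace ℝ (Fin r) =>
      (1 / 2 : ℝ) * ((Φ.mulVec b + (fun i => u₀ i : Fin n → ℝ)) ⬝ᵥ Q.mulVec (Φ.mulVec b + (fun i => u₀ i : Fin n → ℝ))) +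
        c ⬝ᵥ (Pdeim.mulVec (G (WithLp.toLp 2 (Φ.mulVec b + (fun i => u₀ i : Fin n → ℝ)) : EuclideanSpace ℝ (Fin n))) +
          ((1 : Matrix (Fin n) (Fin n) ℝ) - Pdeim).mulVec (G u₀)))
    (a : ℝ → EuclideanSpace ℝ (Fin r)) (ha : Differentiable ℝ a)
    (hode : ∀ t : ℝ, deriv a t =
      (Φᵀ * D * Φ).mulVec (gradient Hr (a t) : EuclideanSpace ℝ (Fin r)))
    (ha0 : a 0 = 0) :
    ∀ t : ℝ, Hr (a t) =
      (1 / 2 : ℝ) * (u₀ ⬝ᵥ Q.mulVec u₀) + c ⬝ᵥ (G u₀ : Fin n → ℝ) := by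
  intro t
  have hHr_diff : Differentiable ℝ Hr := by
    rw [hHr]
    fun_prop
  rw [hamiltonian_comp_eq_of_skew_gradient_flow hHr_diff (transpose_transpose_mul_mul_eq_neg hD Φ)
    ha hode t 0, ha0, hHr]
  simp [sub_mulVec]

/-- Shifted-snapshot SP-DEIM model: with `D` skew-symmetric, `D_r = Φᵀ D Φ`, and the
shifted reduced Hamiltonian
`H_r(a) = ½ (Φa + u₀)ᵀ Q (Φa + u₀) + cᵀ [𝒫 G(Φa+u₀) + (I − 𝒫) G(u₀)]`,
any differentiable solution of `ȧ(t) = D_r ∇ₐH_r(a(t))` with `a(0) = 0` satisfies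
`H_r(a(t)) = H(u₀)` for all `t`, where `H(u) = ½ uᵀ Q u + cᵀ G(u)`. -/
theorem sp_deim_shifted_hamiltonian_equals_initial
    {n r : ℕ} (D : Matrix (Fin n) (Fin n) ℝ) (hD : Dᵀ = -D)
    (Φ : Matrix (Fin n) (Fin r) ℝ)
    (Q : Matrix (Fin n) (Fin n) ℝ) (hQ : Qᵀ = Q)
    (c : Fin n → ℝ) (u₀ : EuclideanSpace ℝ (Fin n))
    (Pdeim : Matrix (Fin n) (Fin n) ℝ)
    (G : EuclideanSpace ℝ (Fin n) → EuclideanSpace ℝ (Fin n))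
    (hG : Differentiable ℝ G)
    (Hr : EuclideanSpace ℝ (Fin r) → ℝ)
    (hHr : Hr = fun b : EuclideanSpace ℝ (Fin r) =>
      (1 / 2 : ℝ) * ((Φ.mulVec b + (fun i => u₀ i : Fin n → ℝ)) ⬝ᵥ Q.mulVec (Φ.mulVec b + (fun i => u₀ i : Fin n → ℝ))) +
        c ⬝ᵥ (Pdeim.mulVec (G (WithLp.toLp 2 (Φ.mulVec b + (fun i => u₀ i : Fin n → ℝ)) : EuclideanSpace ℝ (Fin n))) +
          ((1 : Matrix (Fin n) (Fin n) ℝ) - Pdeim).mulVec (G u₀)))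
    (a : ℝ → EuclideanSpace ℝ (Fin r)) (ha : Differentiable ℝ a)
    (hode : ∀ t : ℝ, deriv a t =
      (Φᵀ * D * Φ).mulVec (gradient Hr (a t) : EuclideanSpace ℝ (Fin r)))
    (ha0 : a 0 = 0) :
    ∀ t : ℝ, Hr (a t) =
      (1 / 2 : ℝ) * (u₀ ⬝ᵥ Q.mulVec u₀) + c ⬝ᵥ (G u₀ : Fin n → ℝ) :=
  sp_deim_shifted_hamiltonian_equals_initial_general D hD Φ Q c u₀ Pdeim G hG Hr hHr a ha hode ha0
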